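/- arXiv:1903.11214 — 10 statements merged into one kernel-verified Lean document; each statement's English description precedes it below -/
import Mathlib

section
/- Let m > 0, k be an integer with k ≠ 0, and define ψ(r) = (1/(2r))·(1 - √(4k² − 2)·(2/(1 + (2r/m)^{√(4k²−2)}) − 1)) for r ≥ m/2. Then ψ satisfies the Riccati equation ψ'(r) + ψ(r)² = (1/r²)·(k² − 3/4) on [m/2, ∞), with boundary value ψ(m/2) = 1/m. -/
/-- For `m > 0` and a nonzero integer `k`, the explicit function
`ψ(r) = (1/(2r))·(1 − √(4k²−2)·(2/(1 + (2r/m)^√(4k²−2)) − 1))`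
solves the Riccati equation `ψ' + ψ² = (k² − 3/4)/r²` on `[m/2, ∞)` with `ψ(m/2) = 1/m`. -/
theorem riccati_explicit_solution (m : ℝ) (hm : 0 < m) (k : ℤ) (hk : k ≠ 0) :
    let q : ℝ := Real.sqrt (4 * (k : ℝ) ^ 2 - 2)
    let ψ : ℝ → ℝ := fun r =>
      (1 / (2 * r)) * (1 - q * (2 / (1 + (2 * r / m) ^ q) - 1))
    (∀ r ∈ Set.Ici (m / 2),
        HasDerivAt ψ (((k : ℝ) ^ 2 - 3 / 4) / r ^ 2 - ψ r ^ 2) r) ∧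
      ψ (m / 2) = 1 / m := by
  intro q ψ
  have hk1 : (1 : ℝ) ≤ (k : ℝ) ^ 2 := by
    have h1 : (1 : ℤ) ≤ k ^ 2 := by
      rcases hk.lt_or_gt with h | h <;> nlinarith
    exact_mod_cast h1
  have hqpos : 0 < 4 * (k : ℝ) ^ 2 - 2 := by nlinarith
  have hq2 : q ^ 2 = 4 * (k : ℝ) ^ 2 - 2 := Real.sq_sqrt hqpos.le
  have hk2' : (k : ℝ) ^ 2 = (q ^ 2 + 2) / 4 := by linarith
  constructor
  · intro r hr
    have hr0 : 0 < r := lt_of_lt_of_le (by positivity) hr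
    have hx0 : 0 < 2 * r / m := by positivity
    have hspos : 0 < (2 * r / m) ^ q := Real.rpow_pos_of_pos hx0 q
    have hden : (1 : ℝ) + (2 * r / m) ^ q ≠ 0 := by positivity
    have h2r : HasDerivAt (fun t : ℝ => 2 * t) 2 r := by
      simpa using (hasDerivAt_id r).const_mul 2
    have hlin : HasDerivAt (fun t : ℝ => 2 * t / m) (2 / m) r := h2r.div_const m
    have hu : HasDerivAt (fun t : ℝ => (2 * t / m) ^ q)
        (q * (2 * r / m) ^ (q - 1) * (2 / m)) r := by
      have h2 := (Real.hasDerivAt_rpow_const (p := q) (Or.inl hx0.ne')).comp r hlin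
      simpa [Function.comp_def, mul_comm, mul_assoc] using h2
    have f1 : HasDerivAt (fun t : ℝ => 1 / (2 * t))
        ((0 * (2 * r) - 1 * 2) / (2 * r) ^ 2) r :=
      (hasDerivAt_const r 1).div h2r (by positivity)
    have f2 : HasDerivAt (fun t : ℝ => 2 / (1 + (2 * t / m) ^ q))
        ((0 * (1 + (2 * r / m) ^ q) - 2 * (q * (2 * r / m) ^ (q - 1) * (2 / m))) /
          (1 + (2 * r / m) ^ q) ^ 2) r :=
      (hasDerivAt_const r 2).div (hu.const_add 1) hden
    have f5 := ((f2.sub_const 1).const_mul q).const_sub 1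
    have hψ := f1.mul f5
    have hp : (2 * r / m) ^ (q - 1) = (2 * r / m) ^ q / (2 * r / m) := by
      rw [Real.rpow_sub hx0, Real.rpow_one]
    have hψ' : HasDerivAt ψ _ r := hψ
    convert hψ' using 1
    show ((k : ℝ) ^ 2 - 3 / 4) / r ^ 2 -
        ((1 / (2 * r)) * (1 - q * (2 / (1 + (2 * r / m) ^ q) - 1))) ^ 2 = _
    rw [hk2', hp]
    have hm' : m ≠ 0 := hm.ne'
    have hr' : r ≠ 0 := hr0.ne'
    field_simp
    ring
  · show (1 / (2 * (m / 2))) * (1 - q * (2 / (1 + (2 * (m / 2) / m) ^ q) - 1)) = 1 / m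
    have h1 : 2 * (m / 2) / m = 1 := by field_simp
    rw [h1, Real.one_rpow]
    norm_num
end

section
/- Let m > 0, k ∈ ℤ with k ≠ 0, and λ ≤ 0. Suppose γ is a differentiable real function on an interval [m/2, b) with γ(m/2) = 1/m satisfying γ'(r) + γ(r)² = −1/(4r²) + k²/r² − (m/r³)·(1 + m/(2r))^{-2} − λ·(1 + m/(2r))⁴. Then γ(r) ≥ ψ(r) for all r in [m/2, b), where ψ(r) = (1/(2r))·(1 − √(4k² − 2)·(2/(1 + (2r/m)^{√(4k²−2)}) − 1)). In particular, γ does not tend to −∞ at any finite point. -/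
/-! The difference of two Riccati solutions satisfies a linear equation,
`(γ - ψ)' = (F - G) - (γ + ψ)(γ - ψ)`, so after multiplying by the integrating factor
`exp ∫ (γ + ψ)` it is nondecreasing as soon as `F ≥ G`; equal initial values then give
`γ ≥ ψ`. Here `ψ` solves `ψ' + ψ² = (4k² - 3)/(4r²)`, and the right-hand side of the
`γ`-equation dominates this because `λ ≤ 0` and the mass term is at most `1/(2r²)`. -/

open Set

lemma exists_hasDerivAt_eq_of_continuousOn {p : ℝ → ℝ} {a c : ℝ} (hac : a ≤ c)
    (hp : ContinuousOn p (Icc a c)) :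
    ∃ P : ℝ → ℝ, ∀ x ∈ Icc a c, HasDerivAt P (p x) x := by
  have hq : Continuous (IccExtend hac ((Icc a c).domRestrict p)) := hp.domRestrict.Icc_extend'
  refine ⟨fun x => ∫ t in a..x, IccExtend hac ((Icc a c).domRestrict p) t, fun x hx => ?_⟩
  simpa [IccExtend_of_mem _ _ hx] using (hq.integral_hasStrictDerivAt a x).hasDerivAt

lemma nonneg_of_hasDerivAt_add_mul_nonneg {w w' p : ℝ → ℝ} {a c : ℝ} (hac : a ≤ c)
    (hw : ∀ x ∈ Icc a c, HasDerivAt w (w' x) x) (hp : ContinuousOn p (Icc a c))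
    (hw' : ∀ x ∈ Ioo a c, 0 ≤ w' x + p x * w x) (ha : 0 ≤ w a) : 0 ≤ w c := by
  obtain ⟨P, hP⟩ := exists_hasDerivAt_eq_of_continuousOn hac hp
  have hG : ∀ x ∈ Icc a c, HasDerivAt (fun x => w x * Real.exp (P x))
      ((w' x + p x * w x) * Real.exp (P x)) x := fun x hx =>
    ((hw x hx).mul (hP x hx).exp).congr_deriv (by ring)
  have hmono : MonotoneOn (fun x => w x * Real.exp (P x)) (Icc a c) := by
    refine monotoneOn_of_hasDerivWithinAt_nonneg (convex_Icc a c)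
      (f' := fun x => (w' x + p x * w x) * Real.exp (P x))
      (fun x hx => (hG x hx).continuousAt.continuousWithinAt) ?_ ?_ <;> rw [interior_Icc]
    · exact fun x hx => (hG x (Ioo_subset_Icc_self hx)).hasDerivWithinAt
    · exact fun x hx => mul_nonneg (hw' x hx) (Real.exp_pos _).le
  have hc : 0 ≤ w c * Real.exp (P c) :=
    (mul_nonneg ha (Real.exp_pos _).le).trans
      (hmono (left_mem_Icc.2 hac) (right_mem_Icc.2 hac) hac)
  exact nonneg_of_mul_nonneg_left hc (Real.exp_pos _)

theorem riccati_comparison {u v f g : ℝ → ℝ} {a c : ℝ} (hac : a ≤ c)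
    (hu : ∀ x ∈ Icc a c, HasDerivAt u (f x - u x ^ 2) x)
    (hv : ∀ x ∈ Icc a c, HasDerivAt v (g x - v x ^ 2) x)
    (hgf : ∀ x ∈ Ioo a c, g x ≤ f x) (ha : v a ≤ u a) : v c ≤ u c := by
  have hsum : ContinuousOn (fun x => u x + v x) (Icc a c) := fun x hx =>
    ((hu x hx).continuousAt.add (hv x hx).continuousAt).continuousWithinAt
  refine sub_nonneg.1 <| nonneg_of_hasDerivAt_add_mul_nonneg (w := fun x => u x - v x) hac
    (fun x hx => (hu x hx).sub (hv x hx)) hsum (fun x hx => ?_) (sub_nonneg.2 ha)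
  linarith [hgf x hx]

-- `ψ = y'/y` for the solution `y = r^((1+a)/2) + (m/2)^a r^((1-a)/2)` of the Euler equation
-- `y'' = (a² - 1)/(4r²) y`.
noncomputable def eulerRiccatiSolution (m a r : ℝ) : ℝ :=
  1 / (2 * r) * (1 - a * (2 / (1 + (2 * r / m) ^ a) - 1))

lemma eulerRiccatiSolution_half {m : ℝ} (hm : m ≠ 0) (a : ℝ) :
    eulerRiccatiSolution m a (m / 2) = 1 / m := by
  have h : 2 * (m / 2) / m = 1 := by field_simp
  simp only [eulerRiccatiSolution, h, Real.one_rpow]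
  norm_num

lemma hasDerivAt_eulerRiccatiSolution {m r : ℝ} (hm : 0 < m) (hr : 0 < r) (a : ℝ) :
    HasDerivAt (eulerRiccatiSolution m a)
      ((a ^ 2 - 1) / (4 * r ^ 2) - eulerRiccatiSolution m a r ^ 2) r := by
  have hx : 0 < 2 * r / m := by positivity
  have hden : 0 < 1 + (2 * r / m) ^ a := by positivity
  have hpow : HasDerivAt (fun x => (2 * x / m) ^ a) (a * (2 * r / m) ^ a / r) r := by
    have hlin : HasDerivAt (fun x : ℝ => 2 * x / m) (2 / m) r := by
      simpa using ((hasDerivAt_id r).const_mul 2).div_const m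
    refine ((Real.hasDerivAt_rpow_const (p := a) (Or.inl hx.ne')).comp r hlin).congr_deriv ?_
    rw [Real.rpow_sub_one hx.ne']
    field_simp
  have hfrac :=
    (((hasDerivAt_const r 2).fun_div (hpow.const_add 1) hden.ne').sub_const 1).const_mul a
  have hrecip :=
    (hasDerivAt_const r 1).fun_div ((hasDerivAt_id' r).const_mul 2) (by positivity)
  refine (hrecip.fun_mul (hfrac.const_sub 1)).congr_deriv ?_
  simp only [eulerRiccatiSolution]
  field_simp
  ring

lemma euler_coeff_le_riccati_coeff (k : ℝ) {m r Λ : ℝ} (hm : 0 ≤ m) (hr : 0 < r)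
    (hΛ : Λ ≤ 0) :
    (4 * k ^ 2 - 3) / (4 * r ^ 2) ≤ -1 / (4 * r ^ 2) + k ^ 2 / r ^ 2
      - (m / r ^ 3) * (1 + m / (2 * r))⁻¹ ^ 2 - Λ * (1 + m / (2 * r)) ^ 4 := by
  have hmass : (m / r ^ 3) * (1 + m / (2 * r))⁻¹ ^ 2 ≤ 1 / (2 * r ^ 2) := by
    -- `8 m r ≤ (2 r + m)²`
    have h : (m / r ^ 3) * (1 + m / (2 * r))⁻¹ ^ 2 = 4 * m / (r * (2 * r + m) ^ 2) := by
      field_simp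
      ring
    rw [h, div_le_div_iff₀ (by positivity) (by positivity)]
    nlinarith [mul_nonneg hr.le (sq_nonneg (2 * r - m))]
  have hΛ' : Λ * (1 + m / (2 * r)) ^ 4 ≤ 0 := mul_nonpos_of_nonpos_of_nonneg hΛ (by positivity)
  have h : (4 * k ^ 2 - 3) / (4 * r ^ 2) =
      -1 / (4 * r ^ 2) + k ^ 2 / r ^ 2 - 1 / (2 * r ^ 2) := by
    field_simp
    ring
  linarith

/-- Comparison principle: for `m > 0`, `k ≠ 0`, `λ ≤ 0`, any solution `γ` on `[m/2, b)` of
`γ' + γ² = −1/(4r²) + k²/r² − (m/r³)(1 + m/(2r))⁻² − λ(1 + m/(2r))⁴` with `γ(m/2) = 1/m`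
satisfies `γ ≥ ψ` where `ψ` is the explicit comparison solution. -/
theorem riccati_comparison_no_blowup (m : ℝ) (hm : 0 < m) (k : ℤ) (hk : k ≠ 0)
    (Λ : ℝ) (hΛ : Λ ≤ 0) (b : ℝ) (γ : ℝ → ℝ)
    (hγ : ∀ r ∈ Set.Ico (m / 2) b,
      HasDerivAt γ
        (-1 / (4 * r ^ 2) + (k : ℝ) ^ 2 / r ^ 2
          - (m / r ^ 3) * (1 + m / (2 * r))⁻¹ ^ 2
          - Λ * (1 + m / (2 * r)) ^ 4 - γ r ^ 2) r)
    (hinit : γ (m / 2) = 1 / m) :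
    ∀ r ∈ Set.Ico (m / 2) b,
      (1 / (2 * r)) * (1 - Real.sqrt (4 * (k : ℝ) ^ 2 - 2) *
        (2 / (1 + (2 * r / m) ^ Real.sqrt (4 * (k : ℝ) ^ 2 - 2)) - 1)) ≤ γ r := by
  intro r hr
  have hk2 : (1 : ℝ) ≤ (k : ℝ) ^ 2 := by
    exact_mod_cast (one_le_sq_iff_one_le_abs k).2 (Int.one_le_abs hk)
  have ha2 : √(4 * (k : ℝ) ^ 2 - 2) ^ 2 - 1 = 4 * (k : ℝ) ^ 2 - 3 := by
    rw [Real.sq_sqrt (by linarith)]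
    ring
  have hpos : ∀ x ∈ Icc (m / 2) r, 0 < x := fun x hx => (half_pos hm).trans_le hx.1
  refine riccati_comparison (f := fun x => -1 / (4 * x ^ 2) + (k : ℝ) ^ 2 / x ^ 2
      - (m / x ^ 3) * (1 + m / (2 * x))⁻¹ ^ 2 - Λ * (1 + m / (2 * x)) ^ 4) hr.1
    (fun x hx => hγ x ⟨hx.1, hx.2.trans_lt hr.2⟩)
    (fun x hx => hasDerivAt_eulerRiccatiSolution hm (hpos x hx) _)
    (fun x hx => ?_) (by rw [hinit, eulerRiccatiSolution_half hm.ne'])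
  rw [ha2]
  exact euler_coeff_le_riccati_coeff _ hm.le (hpos x (Ioo_subset_Icc_self hx)) hΛ
end

section
/- For each real constant c, the function ψ_c(r) = 1/(2r) + (4rm(4·log r + c + 8) + 16r² − 4m²) / (r(4r² − m²)(4·log r + c + 8) − 8r(2r + m)²) satisfies the Riccati equation ψ_c'(r) + ψ_c(r)² = −1/(4r²) − (m/r³)·(1 + m/(2r))^{-2} on its domain of definition, for any fixed m > 0. -/
/-- For each real `c` and `m > 0`, the explicit function `ψ_c` solves the radial Riccati
equation `ψ' + ψ² = −1/(4r²) − (m/r³)(1 + m/(2r))⁻²` wherever its denominator is nonzero. -/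
theorem riccati_radial_explicit_solution (m : ℝ) (hm : 0 < m) (c : ℝ) :
    let ψ : ℝ → ℝ := fun r =>
      1 / (2 * r) +
        (4 * r * m * (4 * Real.log r + c + 8) + 16 * r ^ 2 - 4 * m ^ 2) /
          (r * (4 * r ^ 2 - m ^ 2) * (4 * Real.log r + c + 8) - 8 * r * (2 * r + m) ^ 2)
    ∀ r : ℝ, m / 2 < r →
      r * (4 * r ^ 2 - m ^ 2) * (4 * Real.log r + c + 8) - 8 * r * (2 * r + m) ^ 2 ≠ 0 →
      HasDerivAt ψ
        (-1 / (4 * r ^ 2) - (m / r ^ 3) * (1 + m / (2 * r))⁻¹ ^ 2 - ψ r ^ 2) r := by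
  intro ψ r hr hD
  have hrpos : 0 < r := lt_of_le_of_lt (by positivity) hr
  have hr0 : r ≠ 0 := ne_of_gt hrpos
  have h2rm : 2 * r + m ≠ 0 := by positivity
  have hinv : 1 + m / (2 * r) ≠ 0 := by positivity
  have hL : HasDerivAt (fun x : ℝ => 4 * Real.log x + c + 8) (4 * r⁻¹) r := by
    simpa using (((Real.hasDerivAt_log hr0).const_mul 4).add_const c).add_const 8
  have h2r : HasDerivAt (fun x : ℝ => 2 * x) (2 * 1) r := (hasDerivAt_id r).const_mul 2
  have h1 : HasDerivAt (fun x : ℝ => 1 / (2 * x))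
      ((0 * (2 * r) - 1 * (2 * 1)) / (2 * r) ^ 2) r :=
    (hasDerivAt_const r 1).div h2r (by simpa using hr0)
  have hA : HasDerivAt (fun x : ℝ => 4 * x * m) (4 * 1 * m) r :=
    ((hasDerivAt_id r).const_mul 4).mul_const m
  have hN : HasDerivAt
      (fun x : ℝ => 4 * x * m * (4 * Real.log x + c + 8) + 16 * x ^ 2 - 4 * m ^ 2)
      ((4 * 1 * m) * (4 * Real.log r + c + 8) + (4 * r * m) * (4 * r⁻¹)
        + 16 * (2 * r ^ 1)) r :=
    ((hA.mul hL).add (((hasDerivAt_pow 2 r)).const_mul 16)).sub_const (4 * m ^ 2)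
  have hB : HasDerivAt (fun x : ℝ => x * (4 * x ^ 2 - m ^ 2))
      (1 * (4 * r ^ 2 - m ^ 2) + r * (4 * (2 * r ^ 1))) r :=
    (hasDerivAt_id r).mul (((hasDerivAt_pow 2 r).const_mul 4).sub_const (m ^ 2))
  have hsq : HasDerivAt (fun x : ℝ => (2 * x + m) ^ 2)
      (2 * (2 * r + m) ^ 1 * (2 * 1)) r := (h2r.add_const m).pow 2
  have hC : HasDerivAt (fun x : ℝ => 8 * x * (2 * x + m) ^ 2)
      ((8 * 1) * (2 * r + m) ^ 2 + (8 * r) * (2 * (2 * r + m) ^ 1 * (2 * 1))) r :=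
    ((hasDerivAt_id r).const_mul 8).mul hsq
  have hDD : HasDerivAt
      (fun x : ℝ => x * (4 * x ^ 2 - m ^ 2) * (4 * Real.log x + c + 8)
        - 8 * x * (2 * x + m) ^ 2)
      ((1 * (4 * r ^ 2 - m ^ 2) + r * (4 * (2 * r ^ 1))) * (4 * Real.log r + c + 8)
        + (r * (4 * r ^ 2 - m ^ 2)) * (4 * r⁻¹)
        - ((8 * 1) * (2 * r + m) ^ 2 + (8 * r) * (2 * (2 * r + m) ^ 1 * (2 * 1)))) r :=
    (hB.mul hL).sub hC
  have hψ := h1.add (hN.div hDD hD)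
  refine hψ.congr_deriv (Eq.symm ?_)
  have hDval : r * (4 * r ^ 2 - m ^ 2) * (4 * Real.log r + c + 8)
      - 8 * r * (2 * r + m) ^ 2 ≠ 0 := hD
  have hD2 : (4 * Real.log r + c + 8) * (4 * r ^ 2 - m ^ 2) - (r * 2 + m) ^ 2 * 8 ≠ 0 := by
    intro h; apply hD; linear_combination r * h
  show -1 / (4 * r ^ 2) - (m / r ^ 3) * (1 + m / (2 * r))⁻¹ ^ 2 - ψ r ^ 2 = _
  simp only [ψ]
  field_simp
  ring
end

section
/- Let m > 0. For each real c there exists a unique R > m/2 such that (2R − m)(4·log R + 8 + c) = 8(2R + m), and this R tends to +∞ as c tends to −∞. -/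
open Real Filter Set

private noncomputable def gfun (m : ℝ) : ℝ → ℝ :=
  fun x => 16 * m / (2 * x - m) - 4 * Real.log x

private lemma gfun_key (m c x : ℝ) (hm : 0 < m) (hx : m / 2 < x) :
    ((2 * x - m) * (4 * Real.log x + 8 + c) = 8 * (2 * x + m)) ↔ gfun m x = c := by
  have h0 : 2 * x - m ≠ 0 := by intro h; nlinarith
  unfold gfun
  constructor
  · intro h
    field_simp
    linear_combination -h
  · intro h
    field_simp at h
    linear_combination -h

private lemma gfun_deriv (m x : ℝ) (hm : 0 < m) (hx : m / 2 < x) :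
    HasDerivAt (gfun m) (-(32 * m) / (2 * x - m) ^ 2 - 4 / x) x := by
  have hx0 : 0 < x := lt_trans (by positivity) hx
  have h0 : 2 * x - m ≠ 0 := by intro h; nlinarith
  have h1 : HasDerivAt (fun y : ℝ => 2 * y - m) 2 x := by
    simpa using ((hasDerivAt_id x).const_mul 2).sub_const m
  have h2 : HasDerivAt (fun y : ℝ => 16 * m / (2 * y - m))
      ((0 * (2 * x - m) - 16 * m * 2) / (2 * x - m) ^ 2) x :=
    (hasDerivAt_const x (16 * m)).div h1 h0
  have h3 : HasDerivAt (fun y : ℝ => 4 * Real.log y) (4 * x⁻¹) x :=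
    (Real.hasDerivAt_log (ne_of_gt hx0)).const_mul 4
  have := h2.sub h3
  refine this.congr_deriv ?_
  rw [div_eq_mul_inv 4 x]
  ring

private lemma gfun_anti (m : ℝ) (hm : 0 < m) : StrictAntiOn (gfun m) (Ioi (m / 2)) := by
  apply strictAntiOn_of_deriv_neg (convex_Ioi _)
  · intro x hx
    exact (gfun_deriv m x hm hx).continuousAt.continuousWithinAt
  · intro x hx
    rw [interior_Ioi] at hx
    have hxm : m / 2 < x := Set.mem_Ioi.mp hx
    rw [(gfun_deriv m x hm hxm).deriv]
    have hx0 : 0 < x := lt_trans (by positivity) hx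
    have h0 : 0 < 2 * x - m := by linarith [hxm]
    have h1 : 0 < 32 * m / (2 * x - m) ^ 2 := by positivity
    have h2 : 0 < 4 / x := by positivity
    have : -(32 * m) / (2 * x - m) ^ 2 = -(32 * m / (2 * x - m) ^ 2) := by ring
    rw [this]
    linarith

private lemma gfun_top (m : ℝ) (hm : 0 < m) :
    Tendsto (gfun m) (nhdsWithin (m / 2) (Ioi (m / 2))) atTop := by
  have h1 : Tendsto (fun x : ℝ => 2 * x - m) (nhdsWithin (m / 2) (Ioi (m / 2)))
      (nhdsWithin 0 (Ioi 0)) := by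
    apply tendsto_nhdsWithin_of_tendsto_nhds_of_eventually_within
    · have hc : Tendsto (fun x : ℝ => 2 * x - m) (nhds (m / 2)) (nhds 0) := by
        have he : (2 * (m / 2) - m) = 0 := by ring
        rw [← he]
        exact Continuous.tendsto (by continuity) _
      exact hc.mono_left nhdsWithin_le_nhds
    · filter_upwards [self_mem_nhdsWithin] with x hx
      simp only [mem_Ioi] at hx ⊢
      linarith
  have h2 : Tendsto (fun x : ℝ => (2 * x - m)⁻¹) (nhdsWithin (m / 2) (Ioi (m / 2))) atTop :=
    tendsto_inv_nhdsGT_zero.comp h1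
  have h3 : Tendsto (fun x : ℝ => 16 * m / (2 * x - m)) (nhdsWithin (m / 2) (Ioi (m / 2)))
      atTop := by
    simp only [div_eq_mul_inv]
    exact h2.const_mul_atTop (by positivity)
  have h4 : Tendsto (fun x : ℝ => -(4 * Real.log x)) (nhdsWithin (m / 2) (Ioi (m / 2)))
      (nhds (-(4 * Real.log (m / 2)))) := by
    have : ContinuousAt (fun x : ℝ => -(4 * Real.log x)) (m / 2) :=
      ((Real.continuousAt_log (by positivity)).const_mul 4).neg
    exact this.tendsto.mono_left nhdsWithin_le_nhds
  have := h3.atTop_add h4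
  refine this.congr fun x => ?_
  unfold gfun; ring

private lemma gfun_bot (m : ℝ) (hm : 0 < m) : Tendsto (gfun m) atTop atBot := by
  have h1 : Tendsto (fun x : ℝ => 2 * x - m) atTop atTop :=
    tendsto_atTop_add_const_right _ _ (tendsto_id.const_mul_atTop two_pos)
  have h2 : Tendsto (fun x : ℝ => 16 * m / (2 * x - m)) atTop (nhds 0) :=
    Tendsto.div_atTop tendsto_const_nhds h1
  have h3 : Tendsto (fun x : ℝ => -(4 * Real.log x)) atTop atBot := by
    have := Real.tendsto_log_atTop.const_mul_atTop (show (0:ℝ) < 4 by norm_num)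
    exact tendsto_neg_atBot_iff.mpr this
  have h4 : Tendsto (fun x : ℝ => 16 * m / (2 * x - m) + -(4 * Real.log x)) atTop atBot := by
    exact h2.add_atBot h3
  refine h4.congr fun x => ?_
  unfold gfun; ring

/-- For `m > 0` and each real `c` there is a unique `R > m/2` with
`(2R − m)(4 log R + 8 + c) = 8(2R + m)`, and this singularity location `R_c` tends to `+∞`
as `c → −∞`. -/
theorem singularity_exists_unique_and_diverges (m : ℝ) (hm : 0 < m) :
    (∀ c : ℝ, ∃! R : ℝ, m / 2 < R ∧
        (2 * R - m) * (4 * Real.log R + 8 + c) = 8 * (2 * R + m)) ∧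
      ∀ R : ℝ → ℝ,
        (∀ c : ℝ, m / 2 < R c ∧
          (2 * R c - m) * (4 * Real.log (R c) + 8 + c) = 8 * (2 * R c + m)) →
        Filter.Tendsto R Filter.atBot Filter.atTop := by
  have hanti := gfun_anti m hm
  constructor
  · intro c
    -- existence
    have ha : ∃ a, m / 2 < a ∧ c ≤ gfun m a := by
      have := (gfun_top m hm).eventually (eventually_ge_atTop c)
      obtain ⟨a, ha1, ha2⟩ := (this.and self_mem_nhdsWithin).exists
      exact ⟨a, ha2, ha1⟩
    obtain ⟨a, haI, hac⟩ := ha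
    have hb : ∃ b, a ≤ b ∧ gfun m b ≤ c := by
      have := (gfun_bot m hm).eventually (eventually_le_atBot c)
      obtain ⟨b, hb1, hb2⟩ := (this.and (eventually_ge_atTop a)).exists
      exact ⟨b, hb2, hb1⟩
    obtain ⟨b, hab, hbc⟩ := hb
    have hcont : ContinuousOn (gfun m) (Icc a b) := by
      intro x hx
      have hx' : m / 2 < x := lt_of_lt_of_le haI hx.1
      exact (gfun_deriv m x hm hx').continuousAt.continuousWithinAt
    have := intermediate_value_Icc' hab hcont
    have hc : c ∈ Icc (gfun m b) (gfun m a) := ⟨hbc, hac⟩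
    obtain ⟨R, hR1, hR2⟩ := this hc
    have hRI : m / 2 < R := lt_of_lt_of_le haI hR1.1
    refine ⟨R, ⟨hRI, (gfun_key m c R hm hRI).2 hR2⟩, ?_⟩
    intro y hy
    have hyI : m / 2 < y := hy.1
    have hyeq : gfun m y = c := (gfun_key m c y hm hyI).1 hy.2
    exact hanti.injOn hyI hRI (hyeq.trans hR2.symm)
  · intro R hR
    rw [tendsto_atTop]
    intro M
    set M' := max M (m / 2 + 1) with hM'
    have hM'I : m / 2 < M' := lt_of_lt_of_le (by linarith) (le_max_right _ _)
    filter_upwards [eventually_lt_atBot (gfun m M')] with c hc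
    have h1 := (hR c).1
    have h2 : gfun m (R c) = c := (gfun_key m c (R c) hm h1).1 (hR c).2
    by_contra hcon
    push_neg at hcon
    have hRM : R c < M' := lt_of_lt_of_le hcon (le_max_left _ _)
    have := hanti h1 hM'I hRM
    rw [h2] at this
    exact absurd this (not_lt.mpr (le_of_lt hc))
end

section
/- Let m > 0 and define v₀(r) = √(2r/m)·(1 − ((2r − m)/(2r + m))·log √(2r/m)) for r ≥ m/2. Then v₀ satisfies the ODE v''(r) + v(r)·(1/(4r²) + (m/r³)·(1 + m/(2r))^{-2}) = 0 on (m/2, ∞), with v₀(m/2) = 1 and v₀'(m/2) = 1/m. -/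
/-!
Write `v = √(2r/m) · w`. Since `s = √(2r/m)` satisfies `s' = s/(2r)` and `s'' = -s/(4r²)`,
`v'' + v/(4r²) = s (w'' + w'/r)`, and `(m/r³)(1 + m/(2r))⁻² = 4m/(r(2r+m)²)`, so the equation
for `v` becomes `(r w')' + A' w = 0` with `A = (2r-m)/(2r+m)`, `A' = 4m/(2r+m)²`.
For `w = 1 - A L` with `L = log √(2r/m)`, `L' = 1/(2r)`, one gets
`(r w')' + A' w = -L ((r A')' + A A')`, and `(r A')' = -A A'` identically.
At `r = m/2` both `A` and `L` vanish, which gives the initial values.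
-/

open Real Filter Topology

section
variable {m r : ℝ}

lemma hasDerivAt_two_mul_add (c : ℝ) : HasDerivAt (fun x : ℝ => 2 * x + c) 2 r :=
  (hasDerivAt_const_mul 2).add_const c

lemma hasDerivAt_sqrt_two_mul_div (hm : 0 < m) (hr : 0 < r) :
    HasDerivAt (fun x => √(2 * x / m)) (√(2 * r / m) / (2 * r)) r := by
  have hpos : 0 < 2 * r / m := by positivity
  have hsq : m * √(2 * r / m) ^ 2 = 2 * r := by
    rw [sq_sqrt hpos.le]
    field_simp
  refine (((hasDerivAt_const_mul 2).div_const m).sqrt hpos.ne').congr_deriv ?_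
  rw [div_div, div_eq_div_iff (by positivity) (by positivity)]
  linear_combination -2 * hsq

lemma hasDerivAt_log_sqrt_two_mul_div (hm : 0 < m) (hr : 0 < r) :
    HasDerivAt (fun x => log √(2 * x / m)) (1 / (2 * r)) r := by
  have hs : √(2 * r / m) ≠ 0 := (sqrt_pos.2 (by positivity)).ne'
  refine ((hasDerivAt_sqrt_two_mul_div hm hr).log hs).congr_deriv ?_
  field_simp

lemma hasDerivAt_sub_div_add (h : 2 * r + m ≠ 0) :
    HasDerivAt (fun x => (2 * x - m) / (2 * x + m)) (4 * m / (2 * r + m) ^ 2) r := by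
  refine (((hasDerivAt_const_mul 2).sub_const m).fun_div (hasDerivAt_two_mul_add m) h).congr_deriv
    ?_
  field_simp
  ring

lemma deriv_deriv_sqrt_two_mul_div_mul (hm : 0 < m) (hr : 0 < r) {w w' : ℝ → ℝ} {w'' : ℝ}
    (hw : ∀ᶠ x in 𝓝 r, HasDerivAt w (w' x) x) (hw' : HasDerivAt w' w'' r) :
    deriv (deriv fun x => √(2 * x / m) * w x) r =
      √(2 * r / m) * (w'' + w' r / r - w r / (4 * r ^ 2)) := by
  have hderiv : deriv (fun x => √(2 * x / m) * w x) =ᶠ[𝓝 r]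
      fun x => √(2 * x / m) / (2 * x) * w x + √(2 * x / m) * w' x := by
    filter_upwards [hw, eventually_gt_nhds hr] with x hwx hx
    exact ((hasDerivAt_sqrt_two_mul_div hm hx).mul hwx).deriv
  have hs := hasDerivAt_sqrt_two_mul_div hm hr
  have hsecond := ((hs.fun_div (hasDerivAt_const_mul 2) (by positivity)).fun_mul
    hw.self_of_nhds).fun_add (hs.fun_mul hw')
  rw [hderiv.deriv_eq, hsecond.deriv]
  field_simp
  ring

noncomputable def radialProfile (m x : ℝ) : ℝ :=
  1 - (2 * x - m) / (2 * x + m) * log √(2 * x / m)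

noncomputable def radialProfileDeriv (m x : ℝ) : ℝ :=
  -(4 * m / (2 * x + m) ^ 2 * log √(2 * x / m) + (2 * x - m) / (2 * x + m) / (2 * x))

lemma hasDerivAt_radialProfile (hm : 0 < m) (hr : 0 < r) :
    HasDerivAt (radialProfile m) (radialProfileDeriv m r) r := by
  refine ((hasDerivAt_const r 1).sub ((hasDerivAt_sub_div_add (by positivity)).mul
    (hasDerivAt_log_sqrt_two_mul_div hm hr))).congr_deriv ?_
  rw [radialProfileDeriv]
  ring

lemma hasDerivAt_radialProfileDeriv (hm : 0 < m) (hr : 0 < r) :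
    HasDerivAt (radialProfileDeriv m)
      (-(radialProfileDeriv m r / r) - 4 * m / (r * (2 * r + m) ^ 2) * radialProfile m r) r := by
  have hA := hasDerivAt_sub_div_add (m := m) (r := r) (by positivity)
  have hL := hasDerivAt_log_sqrt_two_mul_div hm hr
  have hA' : HasDerivAt (fun x => 4 * m / (2 * x + m) ^ 2) (-(16 * m) / (2 * r + m) ^ 3) r := by
    refine ((hasDerivAt_const r (4 * m)).fun_div ((hasDerivAt_two_mul_add m).fun_pow 2)
      (by positivity)).congr_deriv ?_
    field_simp
    ring
  refine (((hA'.fun_mul hL).fun_add (hA.fun_div (hasDerivAt_const_mul 2)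
    (by positivity))).fun_neg).congr_deriv ?_
  rw [radialProfileDeriv, radialProfile]
  field_simp
  ring

end

/-- For `m > 0`, the explicit function `v₀(r) = √(2r/m)(1 − ((2r−m)/(2r+m)) log √(2r/m))`
solves `v'' + v·(1/(4r²) + (m/r³)(1 + m/(2r))⁻²) = 0` on `(m/2, ∞)` with `v₀(m/2) = 1`
and `v₀'(m/2) = 1/m`. -/
theorem radial_jacobi_field_explicit (m : ℝ) (hm : 0 < m) :
    let v : ℝ → ℝ := fun r =>
      Real.sqrt (2 * r / m) *
        (1 - (2 * r - m) / (2 * r + m) * Real.log (Real.sqrt (2 * r / m)))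
    (∀ r : ℝ, m / 2 < r →
        deriv (deriv v) r +
          v r * (1 / (4 * r ^ 2) + (m / r ^ 3) * (1 + m / (2 * r))⁻¹ ^ 2) = 0) ∧
      v (m / 2) = 1 ∧ deriv v (m / 2) = 1 / m := by
  intro v
  have hv : v = fun x => √(2 * x / m) * radialProfile m x := rfl
  have hm2 : 0 < m / 2 := half_pos hm
  have hmid : 2 * (m / 2) = m := by ring
  refine ⟨fun r hr => ?_, ?_, ?_⟩
  · have hr0 : 0 < r := hm2.trans hr
    rw [hv, deriv_deriv_sqrt_two_mul_div_mul hm hr0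
      ((eventually_gt_nhds hr0).mono fun x hx => hasDerivAt_radialProfile hm hx)
      (hasDerivAt_radialProfileDeriv hm hr0)]
    field_simp
    ring
  · simp [v, hmid, hm.ne']
  · rw [hv, ((hasDerivAt_sqrt_two_mul_div hm hm2).fun_mul
      (hasDerivAt_radialProfile hm hm2)).deriv]
    simp [radialProfile, radialProfileDeriv, hmid, hm.ne']
end

section
/- Let m > 0. The function v₀(r) = √(2r/m)·(1 − ((2r − m)/(2r + m))·log √(2r/m)) has exactly one zero in (m/2, ∞), namely the unique R > m/2 with log √(2R/m) = (2R + m)/(2R − m). -/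
/-!
On `r > m/2` the factor `√(2r/m)` is positive, so `v₀(r) = 0` exactly when
`log √(2r/m) = (2r + m)/(2r - m)`. The left side increases in `r` and the right side
`1 + 2m/(2r - m)` decreases, so their difference is strictly increasing; it is negative at
`r = m` and positive at `r = (m/2) e⁴`, hence vanishes exactly once by the intermediate value
theorem.
-/

open Real Set

theorem one_sub_div_mul_eq_zero_iff {K : Type*} [Field K] {a b L : K} (ha : a ≠ 0)
    (hb : b ≠ 0) : 1 - a / b * L = 0 ↔ L = b / a := by
  rw [sub_eq_zero, eq_comm, div_mul_eq_mul_div, div_eq_one_iff_eq hb, eq_div_iff ha, mul_comm]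

theorem IsPreconnected.existsUnique_eq_of_strictMonoOn {X α : Type*} [TopologicalSpace X]
    [LinearOrder X] [TopologicalSpace α] [LinearOrder α] [OrderClosedTopology α] {s : Set X}
    {f : X → α} (hs : IsPreconnected s) (hf : ContinuousOn f s) (hmono : StrictMonoOn f s)
    {a b : X} {c : α} (ha : a ∈ s) (hb : b ∈ s) (hfa : f a ≤ c) (hfb : c ≤ f b) :
    ∃! x, x ∈ s ∧ f x = c := by
  obtain ⟨x, hx, hfx⟩ := hs.intermediate_value ha hb hf ⟨hfa, hfb⟩
  exact ⟨x, ⟨hx, hfx⟩, fun y ⟨hy, hfy⟩ => hmono.injOn hy hx (hfy.trans hfx.symm)⟩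

section Schwarzschild

variable {m : ℝ}

theorem strictMonoOn_log_sqrt_two_mul_div (hm : 0 < m) :
    StrictMonoOn (fun r : ℝ => log √(2 * r / m)) (Ioi 0) := by
  intro r hr s _ hrs
  have hr : 0 < r := hr
  exact log_lt_log (by positivity) (sqrt_lt_sqrt (by positivity) (by gcongr))

theorem strictAntiOn_two_mul_add_div_two_mul_sub (hm : 0 < m) :
    StrictAntiOn (fun r : ℝ => (2 * r + m) / (2 * r - m)) (Ioi (m / 2)) := by
  intro r hr s hs hrs
  have hr : m / 2 < r := hr
  have hs : m / 2 < s := hs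
  rw [div_lt_div_iff₀ (by linarith) (by linarith)]
  nlinarith

noncomputable def jacobiZeroDefect (m r : ℝ) : ℝ :=
  log √(2 * r / m) - (2 * r + m) / (2 * r - m)

theorem strictMonoOn_jacobiZeroDefect (hm : 0 < m) :
    StrictMonoOn (jacobiZeroDefect m) (Ioi (m / 2)) := by
  have hlog := (strictMonoOn_log_sqrt_two_mul_div hm).mono (Ioi_subset_Ioi (half_pos hm).le)
  convert hlog.add (strictAntiOn_two_mul_add_div_two_mul_sub hm).neg using 1
  exact funext fun r => sub_eq_add_neg _ _

theorem continuousOn_jacobiZeroDefect (hm : 0 < m) :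
    ContinuousOn (jacobiZeroDefect m) (Ioi (m / 2)) := by
  intro r hr
  have hr : m / 2 < r := hr
  have hsqrt : √(2 * r / m) ≠ 0 := (sqrt_pos.2 (div_pos (by linarith) hm)).ne'
  have hsub : 2 * r - m ≠ 0 := by linarith
  refine ContinuousAt.continuousWithinAt ?_
  unfold jacobiZeroDefect
  fun_prop (disch := assumption)

theorem jacobiZeroDefect_self_neg (hm : 0 < m) : jacobiZeroDefect m m < 0 := by
  have h2 : 2 * m / m = 2 := by field_simp
  have h3 : (2 * m + m) / (2 * m - m) = 3 := by field_simp; ring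
  rw [jacobiZeroDefect, h2, h3, log_sqrt zero_le_two]
  linarith [log_two_lt_d9]

theorem jacobiZeroDefect_exp_four_pos (hm : 0 < m) :
    0 < jacobiZeroDefect m (m / 2 * exp 4) := by
  have hexp : 5 ≤ exp 4 := by linarith [add_one_le_exp (4 : ℝ)]
  have hx : 2 * (m / 2 * exp 4) / m = exp 4 := by field_simp
  have hq : (2 * (m / 2 * exp 4) + m) / (2 * (m / 2 * exp 4) - m) < 2 := by
    rw [div_lt_iff₀ (by nlinarith)]
    nlinarith
  rw [jacobiZeroDefect, hx, log_sqrt (exp_pos 4).le, log_exp]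
  linarith

end Schwarzschild

/-- For `m > 0`, the function `v₀(r) = √(2r/m)(1 − ((2r−m)/(2r+m)) log √(2r/m))` has exactly
one zero in `(m/2, ∞)`, namely the unique `R > m/2` with `log √(2R/m) = (2R + m)/(2R − m)`. -/
theorem radial_jacobi_field_unique_zero (m : ℝ) (hm : 0 < m) :
    let v : ℝ → ℝ := fun r =>
      Real.sqrt (2 * r / m) *
        (1 - (2 * r - m) / (2 * r + m) * Real.log (Real.sqrt (2 * r / m)))
    (∃! R : ℝ, m / 2 < R ∧ v R = 0) ∧
      ∀ R : ℝ, m / 2 < R →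
        (v R = 0 ↔ Real.log (Real.sqrt (2 * R / m)) = (2 * R + m) / (2 * R - m)) := by
  intro v
  have hv : ∀ R : ℝ, m / 2 < R →
      (v R = 0 ↔ Real.log (Real.sqrt (2 * R / m)) = (2 * R + m) / (2 * R - m)) := by
    intro R hR
    have hsqrt : √(2 * R / m) ≠ 0 := (sqrt_pos.2 (div_pos (by linarith) hm)).ne'
    rw [mul_eq_zero, or_iff_right hsqrt, one_sub_div_mul_eq_zero_iff (by linarith) (by linarith)]
  have hdefect : ∀ R : ℝ, m / 2 < R → (v R = 0 ↔ jacobiZeroDefect m R = 0) := fun R hR =>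
    (hv R hR).trans sub_eq_zero.symm
  refine ⟨?_, hv⟩
  obtain ⟨R, ⟨hR, hR0⟩, huniq⟩ := isPreconnected_Ioi.existsUnique_eq_of_strictMonoOn
    (continuousOn_jacobiZeroDefect hm) (strictMonoOn_jacobiZeroDefect hm)
    (half_lt_self hm) (lt_mul_of_one_lt_right (half_pos hm) (one_lt_exp_iff.2 four_pos))
    (jacobiZeroDefect_self_neg hm).le (jacobiZeroDefect_exp_four_pos hm).le
  exact ⟨R, ⟨hR, (hdefect R hR).2 hR0⟩, fun y ⟨hy, hvy⟩ => huniq y ⟨hy, (hdefect y hy).1 hvy⟩⟩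
end

section
/- Let m > 0. There exists a unique R > m/2 satisfying log √(2R/m) = (2R + m)/(2R − m); moreover this R satisfies R > m. -/
noncomputable def gSch (m R : ℝ) : ℝ := Real.log (2*R/m)/2 - (2*R+m)/(2*R-m)

lemma gSch_mono (m : ℝ) (hm : 0 < m) : StrictMonoOn (gSch m) (Set.Ioi (m/2)) := by
  intro a ha b hb hab
  simp only [Set.mem_Ioi] at ha hb
  have ha' : 0 < 2*a - m := by linarith
  have hb' : 0 < 2*b - m := by linarith
  have h1 : Real.log (2*a/m) < Real.log (2*b/m) := by
    apply Real.log_lt_log (div_pos (by linarith) hm)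
    apply div_lt_div_of_pos_right (by linarith) hm
  have h2 : (2*b+m)/(2*b-m) < (2*a+m)/(2*a-m) := by
    rw [div_lt_div_iff₀ hb' ha']
    nlinarith
  unfold gSch
  linarith

lemma gSch_cont (m : ℝ) (hm : 0 < m) :
    ContinuousOn (gSch m) (Set.Ici m) := by
  unfold gSch
  apply ContinuousOn.sub
  · apply ContinuousOn.div_const
    apply ContinuousOn.log (by fun_prop)
    intro x hx
    simp only [Set.mem_Ici] at hx
    exact ne_of_gt (div_pos (by linarith) hm)
  · apply ContinuousOn.div (by fun_prop) (by fun_prop)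
    intro x hx
    simp only [Set.mem_Ici] at hx
    nlinarith

/-- For `m > 0`, there is a unique `R > m/2` with `log √(2R/m) = (2R + m)/(2R − m)`,
and this `R` satisfies `R > m`. -/
theorem maximal_stability_radius (m : ℝ) (hm : 0 < m) :
    (∃! R : ℝ, m / 2 < R ∧
        Real.log (Real.sqrt (2 * R / m)) = (2 * R + m) / (2 * R - m)) ∧
      ∀ R : ℝ, (m / 2 < R ∧
        Real.log (Real.sqrt (2 * R / m)) = (2 * R + m) / (2 * R - m)) → m < R := by
  have key : ∀ R : ℝ, m / 2 < R →
      (Real.log (Real.sqrt (2 * R / m)) = (2 * R + m) / (2 * R - m) ↔ gSch m R = 0) := by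
    intro R hR
    rw [Real.log_sqrt (le_of_lt (div_pos (by linarith) hm))]
    unfold gSch
    constructor <;> intro h <;> linarith
  set B := m * Real.exp 9 / 2 with hB
  have he9 : (10:ℝ) ≤ Real.exp 9 := by
    have := Real.add_one_le_exp (9:ℝ)
    linarith
  have hmB : m ≤ B := by
    rw [hB]; nlinarith
  have hgm : gSch m m < 0 := by
    unfold gSch
    have h2 : 2*m/m = 2 := by field_simp
    have h3 : (2*m+m)/(2*m-m) = 3 := by
      rw [show 2*m+m = 3*m by ring, show 2*m-m = m by ring]
      field_simp
    rw [h2, h3]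
    have := Real.log_two_lt_d9
    linarith
  have hgB : 0 < gSch m B := by
    unfold gSch
    have h2 : 2*B/m = Real.exp 9 := by rw [hB]; field_simp
    rw [h2, Real.log_exp]
    have hd : 0 < 2*B - m := by nlinarith
    have : (2*B+m)/(2*B-m) < 9/2 := by
      rw [div_lt_iff₀ hd]; nlinarith
    linarith
  have hB2 : m/2 < B := by linarith
  have hm2 : m/2 < m := by linarith
  obtain ⟨R, hRmem, hR0⟩ := intermediate_value_Icc hmB
    (gSch_cont m hm |>.mono (Set.Icc_subset_Ici_self))
    (Set.mem_Icc.mpr ⟨le_of_lt hgm, le_of_lt hgB⟩)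
  simp only [Set.mem_Icc] at hRmem
  have hRgt : m/2 < R := by linarith [hRmem.1]
  constructor
  · refine ⟨R, ⟨hRgt, (key R hRgt).mpr hR0⟩, ?_⟩
    intro y ⟨hy1, hy2⟩
    have hy0 : gSch m y = 0 := (key y hy1).mp hy2
    exact (gSch_mono m hm).injOn hy1 (Set.mem_Ioi.mpr hRgt) (by rw [hy0, hR0])
  · intro S ⟨hS1, hS2⟩
    have hS0 : gSch m S = 0 := (key S hS1).mp hS2
    by_contra h
    push_neg at h
    have : gSch m S ≤ gSch m m := by
      rcases eq_or_lt_of_le h with h' | h'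
      · rw [h']
      · exact le_of_lt ((gSch_mono m hm) (Set.mem_Ioi.mpr hS1) (Set.mem_Ioi.mpr hm2) h')
    linarith
end

section
/- Let m > 0 and let h : [0, ∞) → [2m, ∞) be the inverse of the function r(s) = s·√(1 − 2m/s) + m·log((1 + √(1 − 2m/s))/(1 − √(1 − 2m/s))) defined for s ≥ 2m. Then h satisfies h(0) = 2m and h'(r) = √(1 − 2m/h(r)) for r > 0. -/
open Real Set

private lemma schw_rderiv (m : ℝ) (hm : 0 < m) (s : ℝ) (hs : 2 * m < s) :
    HasDerivAt (fun s =>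
      s * Real.sqrt (1 - 2 * m / s) +
        m * Real.log ((1 + Real.sqrt (1 - 2 * m / s)) / (1 - Real.sqrt (1 - 2 * m / s))))
      (Real.sqrt (1 - 2 * m / s))⁻¹ s := by
  have hs0 : 0 < s := lt_trans (by positivity) hs
  have hq : 0 < 1 - 2 * m / s := by
    have : 2 * m / s < 1 := (div_lt_one hs0).2 hs
    linarith
  have hu0 : 0 < Real.sqrt (1 - 2 * m / s) := Real.sqrt_pos.2 hq
  have hu2 : Real.sqrt (1 - 2 * m / s) ^ 2 = 1 - 2 * m / s := Real.sq_sqrt hq.le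
  have hu1 : Real.sqrt (1 - 2 * m / s) < 1 := by
    have hq1 : 1 - 2 * m / s < 1 := by
      have : 0 < 2 * m / s := by positivity
      linarith
    nlinarith [Real.sqrt_nonneg (1 - 2 * m / s)]
  have hinner : HasDerivAt (fun x : ℝ => 1 - 2 * m / x) (2 * m / s ^ 2) s := by
    have h1 : HasDerivAt (fun x : ℝ => 2 * m * x⁻¹) (2 * m * (-(s ^ 2)⁻¹)) s :=
      (hasDerivAt_inv hs0.ne').const_mul (2 * m)
    have h2 := h1.const_sub 1
    have hfe : (fun x : ℝ => 1 - 2 * m / x) = fun x : ℝ => 1 - 2 * m * x⁻¹ := by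
      ext x; rw [div_eq_mul_inv]
    have hde : 2 * m / s ^ 2 = -(2 * m * -(s ^ 2)⁻¹) := by field_simp
    rw [hfe, hde]; exact h2
  have hsqrt : HasDerivAt (fun x : ℝ => Real.sqrt (1 - 2 * m / x))
      (2 * m / s ^ 2 / (2 * Real.sqrt (1 - 2 * m / s))) s := hinner.sqrt hq.ne'
  have hterm1 : HasDerivAt (fun x : ℝ => x * Real.sqrt (1 - 2 * m / x))
      (1 * Real.sqrt (1 - 2 * m / s) + s * (2 * m / s ^ 2 / (2 * Real.sqrt (1 - 2 * m / s)))) s :=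
    (hasDerivAt_id s).mul hsqrt
  have hnum : HasDerivAt (fun x : ℝ => 1 + Real.sqrt (1 - 2 * m / x))
      (2 * m / s ^ 2 / (2 * Real.sqrt (1 - 2 * m / s))) s := hsqrt.const_add 1
  have hden : HasDerivAt (fun x : ℝ => 1 - Real.sqrt (1 - 2 * m / x))
      (-(2 * m / s ^ 2 / (2 * Real.sqrt (1 - 2 * m / s)))) s := hsqrt.const_sub 1
  have hdne : 1 - Real.sqrt (1 - 2 * m / s) ≠ 0 := by linarith
  have hfrac := hnum.div hden hdne
  have hargne : (1 + Real.sqrt (1 - 2 * m / s)) / (1 - Real.sqrt (1 - 2 * m / s)) ≠ 0 := by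
    apply div_ne_zero <;> [linarith; exact hdne]
  have hlog := (hfrac.log hargne).const_mul m
  have := hterm1.add hlog
  refine this.congr_deriv ?_
  symm
  simp only [Pi.div_apply]
  set u := Real.sqrt (1 - 2 * m / s)
  have hsu : s * u ^ 2 = s - 2 * m := by
    field_simp at hu2
    linarith
  have hm' : m = s * (1 - u ^ 2) / 2 := by linarith
  have hu1' : 1 + u ≠ 0 := by linarith
  rw [hm']
  field_simp
  ring

private lemma schw_rzero (m : ℝ) (hm : 0 < m) :
    (2 * m) * Real.sqrt (1 - 2 * m / (2 * m)) +
      m * Real.log ((1 + Real.sqrt (1 - 2 * m / (2 * m))) /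
        (1 - Real.sqrt (1 - 2 * m / (2 * m)))) = 0 := by
  rw [div_self (by positivity : (2 : ℝ) * m ≠ 0)]
  norm_num

/-- For `m > 0`, the inverse `h` of
`r(s) = s√(1 − 2m/s) + m log((1 + √(1 − 2m/s))/(1 − √(1 − 2m/s)))` on `s ≥ 2m`
satisfies `h(0) = 2m` and `h'(r) = √(1 − 2m/h(r))` for `r > 0`. -/
theorem schwarzschild_warping_function (m : ℝ) (hm : 0 < m) (h : ℝ → ℝ)
    (rfun : ℝ → ℝ)
    (hrfun : rfun = fun s =>
      s * Real.sqrt (1 - 2 * m / s) +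
        m * Real.log ((1 + Real.sqrt (1 - 2 * m / s)) / (1 - Real.sqrt (1 - 2 * m / s))))
    (hmaps₁ : Set.MapsTo rfun (Set.Ici (2 * m)) (Set.Ici 0))
    (hmaps₂ : Set.MapsTo h (Set.Ici 0) (Set.Ici (2 * m)))
    (hinv : Set.InvOn h rfun (Set.Ici (2 * m)) (Set.Ici 0)) :
    h 0 = 2 * m ∧ ∀ r : ℝ, 0 < r → HasDerivAt h (Real.sqrt (1 - 2 * m / h r)) r := by
  have hr0 : rfun (2 * m) = 0 := by rw [hrfun]; exact schw_rzero m hm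
  have h0 : h 0 = 2 * m := by
    have := hinv.1 (self_mem_Ici (a := 2 * m))
    rwa [hr0] at this
  refine ⟨h0, fun r hr => ?_⟩
  -- continuity of rfun on Ici (2m)
  have hcont : ContinuousOn rfun (Ici (2 * m)) := by
    intro s hs
    have hs0 : 0 < s := lt_of_lt_of_le (by positivity) hs
    have hq1 : 1 - 2 * m / s < 1 := by
      have : 0 < 2 * m / s := by positivity
      linarith
    have hu1 : Real.sqrt (1 - 2 * m / s) < 1 := by
      rcases le_or_gt (1 - 2 * m / s) 0 with hle | hpos
      · rw [Real.sqrt_eq_zero_of_nonpos hle]; norm_num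
      · nlinarith [Real.sq_sqrt hpos.le, Real.sqrt_nonneg (1 - 2 * m / s)]
    have hu0 : 0 ≤ Real.sqrt (1 - 2 * m / s) := Real.sqrt_nonneg _
    have hca : ContinuousAt (fun x : ℝ => 1 - 2 * m / x) s :=
      continuousAt_const.sub (continuousAt_const.div continuousAt_id hs0.ne')
    have hcu : ContinuousAt (fun x : ℝ => Real.sqrt (1 - 2 * m / x)) s :=
      Real.continuous_sqrt.continuousAt.comp hca
    have hdne : 1 - Real.sqrt (1 - 2 * m / s) ≠ 0 := by linarith
    have hargne : (1 + Real.sqrt (1 - 2 * m / s)) / (1 - Real.sqrt (1 - 2 * m / s)) ≠ 0 :=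
      div_ne_zero (by linarith) hdne
    have hcarg : ContinuousAt
        (fun x : ℝ => (1 + Real.sqrt (1 - 2 * m / x)) / (1 - Real.sqrt (1 - 2 * m / x))) s :=
      (continuousAt_const.add hcu).div (continuousAt_const.sub hcu) hdne
    have : ContinuousAt rfun s := by
      rw [hrfun]
      exact (continuousAt_id.mul hcu).add
        (continuousAt_const.mul (hcarg.log hargne))
    exact this.continuousWithinAt
  -- strict monotonicity of rfun on Ici (2m)
  have hmono : StrictMonoOn rfun (Ici (2 * m)) := by
    apply strictMonoOn_of_deriv_pos (convex_Ici _) hcont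
    intro x hx
    rw [interior_Ici] at hx
    have hd : HasDerivAt rfun (Real.sqrt (1 - 2 * m / x))⁻¹ x := by
      rw [hrfun]; exact schw_rderiv m hm x hx
    rw [hd.deriv]
    have : 0 < 1 - 2 * m / x := by
      have hx0 : 0 < x := lt_trans (by positivity) hx
      have : 2 * m / x < 1 := (div_lt_one hx0).2 hx
      linarith
    exact inv_pos.2 (Real.sqrt_pos.2 this)
  -- h r > 2m
  have hhr : 2 * m < h r := by
    have hmem : h r ∈ Ici (2 * m) := hmaps₂ (le_of_lt hr)
    rcases eq_or_lt_of_le (Set.mem_Ici.1 hmem) with heq | hlt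
    · exfalso
      have := hinv.2 (le_of_lt hr)
      rw [← heq, hr0] at this
      exact absurd this.symm (ne_of_gt hr)
    · exact hlt
  -- h is monotone on Ioi 0
  have hmonoh : MonotoneOn h (Ioi (0 : ℝ)) := by
    intro a ha b hb hab
    by_contra hcon
    push_neg at hcon
    have := hmono (hmaps₂ (Set.mem_Ici.2 (le_of_lt hb))) (hmaps₂ (Set.mem_Ici.2 (le_of_lt ha))) hcon
    rw [hinv.2 (Set.mem_Ici.2 (le_of_lt ha)), hinv.2 (Set.mem_Ici.2 (le_of_lt hb))] at this
    exact absurd this (not_lt.2 hab)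
  -- continuity of h at r
  have hch : ContinuousAt h r := by
    apply continuousAt_of_monotoneOn_of_image_mem_nhds (f := h) (s := Ioi 0) hmonoh
      (isOpen_Ioi.mem_nhds hr)
    apply Filter.mem_of_superset (isOpen_Ioi.mem_nhds hhr)
    intro x hx
    have hx2m : 2 * m < x := hx
    have hrx : 0 < rfun x := by
      have := hmono (self_mem_Ici) (le_of_lt hx2m) hx2m
      rwa [hr0] at this
    exact ⟨rfun x, hrx, hinv.1 (le_of_lt hx2m)⟩
  -- inverse function theorem
  have hd : HasDerivAt rfun (Real.sqrt (1 - 2 * m / h r))⁻¹ (h r) := by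
    rw [hrfun]; exact schw_rderiv m hm (h r) hhr
  have hq : 0 < 1 - 2 * m / h r := by
    have hhr0 : 0 < h r := lt_trans (by positivity) hhr
    have : 2 * m / h r < 1 := (div_lt_one hhr0).2 hhr
    linarith
  have hne : (Real.sqrt (1 - 2 * m / h r))⁻¹ ≠ 0 :=
    inv_ne_zero (ne_of_gt (Real.sqrt_pos.2 hq))
  have hfg : ∀ᶠ y in nhds r, rfun (h y) = y := by
    filter_upwards [isOpen_Ioi.mem_nhds hr] with y hy
    exact hinv.2 (Set.mem_Ici.2 (le_of_lt hy))
  have := hd.of_local_left_inverse hch hne hfg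
  rwa [inv_inv] at this
end

section
/- Let m > 0 and h be the warping function of the Schwarzschild metric (the inverse of r(s) = s√(1 − 2m/s) + m·log((1 + √(1 − 2m/s))/(1 − √(1 − 2m/s)))). Then h'(r) → 1 as r → ∞, and r·(1 − h'(r)) → m as r → ∞; equivalently h'(r) = 1 − m/r + o(1/r). -/
open Real Filter Set

lemma sw_hasDerivAt (m : ℝ) (hm : 0 < m) {s : ℝ} (hs : 2 * m < s) :
    HasDerivAt (fun s =>
      s * Real.sqrt (1 - 2 * m / s) +
        m * Real.log ((1 + Real.sqrt (1 - 2 * m / s)) / (1 - Real.sqrt (1 - 2 * m / s))))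
      (1 / Real.sqrt (1 - 2 * m / s)) s := by
  have hs0 : 0 < s := lt_trans (by linarith) hs
  have hc : 0 < 1 - 2 * m / s := by
    rw [sub_pos]; exact (div_lt_one hs0).2 hs
  have hc1 : 1 - 2 * m / s < 1 := by
    have : 0 < 2 * m / s := div_pos (by linarith) hs0
    linarith
  have hupos : 0 < Real.sqrt (1 - 2 * m / s) := Real.sqrt_pos.2 hc
  have hult : Real.sqrt (1 - 2 * m / s) < 1 := by
    have := Real.sqrt_lt_sqrt hc.le hc1
    simpa using this
  set u := Real.sqrt (1 - 2 * m / s) with hu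
  have hu2 : u ^ 2 = 1 - 2 * m / s := Real.sq_sqrt hc.le
  have h1u : 0 < 1 - u := by linarith
  have h1u' : 0 < 1 + u := by linarith
  have hder_c : HasDerivAt (fun x : ℝ => 1 - 2 * m / x) (2 * m / s ^ 2) s := by
    have h1 : HasDerivAt (fun x : ℝ => 1 - 2 * m * x⁻¹) (-(2 * m * (-(s ^ 2)⁻¹))) s :=
      ((hasDerivAt_inv hs0.ne').const_mul (2 * m)).const_sub 1
    have : (fun x : ℝ => 1 - 2 * m * x⁻¹) = fun x : ℝ => 1 - 2 * m / x := by
      funext x; ring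
    rw [this] at h1
    convert h1 using 1; field_simp
  have hder_u : HasDerivAt (fun x : ℝ => Real.sqrt (1 - 2 * m / x))
      (2 * m / s ^ 2 / (2 * u)) s := hder_c.sqrt hc.ne'
  have term1 : HasDerivAt (fun x : ℝ => x * Real.sqrt (1 - 2 * m / x))
      (1 * u + s * (2 * m / s ^ 2 / (2 * u))) s := (hasDerivAt_id s).mul hder_u
  have num : HasDerivAt (fun x : ℝ => 1 + Real.sqrt (1 - 2 * m / x))
      (2 * m / s ^ 2 / (2 * u)) s := hder_u.const_add 1
  have den : HasDerivAt (fun x : ℝ => 1 - Real.sqrt (1 - 2 * m / x))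
      (-(2 * m / s ^ 2 / (2 * u))) s := hder_u.const_sub 1
  have ratio : HasDerivAt
      (fun x : ℝ => (1 + Real.sqrt (1 - 2 * m / x)) / (1 - Real.sqrt (1 - 2 * m / x)))
      ((2 * m / s ^ 2 / (2 * u) * (1 - u) -
        (1 + u) * -(2 * m / s ^ 2 / (2 * u))) / (1 - u) ^ 2) s := num.div den h1u.ne'
  have hrat_pos : (0:ℝ) < (1 + u) / (1 - u) := div_pos h1u' h1u
  have logd := ratio.log hrat_pos.ne'
  have total := term1.add (logd.const_mul m)
  refine total.congr_deriv ?_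
  rw [← hu]
  have hsu : s * u ^ 2 = s - 2 * m := by
    rw [hu2]; field_simp
  field_simp
  ring_nf
  linear_combination (s + m - s*u^2) * hsu

lemma sw_alg (m s u L : ℝ) (hs0 : 0 < s) (hup : 0 < u) (hul : u < 1)
    (hsu : s * u ^ 2 = s - 2 * m) :
    (s * u + m * L) * (1 - u) =
      2 * m * u / (1 + u) + 2 * m ^ 2 * (L / s) * (1 / (1 + u)) := by
  have h1 : (1:ℝ) + u ≠ 0 := by positivity
  field_simp
  linear_combination (-(s * u + m * L)) * hsu

/-- For `m > 0`, the Schwarzschild warping function `h` (inverse of the explicit distance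
function `r(s)`) satisfies `h'(r) → 1` and `r(1 − h'(r)) → m` as `r → ∞`,
i.e. `h'(r) = 1 − m/r + o(1/r)`. -/
theorem static_potential_asymptotics (m : ℝ) (hm : 0 < m) (h : ℝ → ℝ)
    (rfun : ℝ → ℝ)
    (hrfun : rfun = fun s =>
      s * Real.sqrt (1 - 2 * m / s) +
        m * Real.log ((1 + Real.sqrt (1 - 2 * m / s)) / (1 - Real.sqrt (1 - 2 * m / s))))
    (hmaps₁ : Set.MapsTo rfun (Set.Ici (2 * m)) (Set.Ici 0))
    (hmaps₂ : Set.MapsTo h (Set.Ici 0) (Set.Ici (2 * m)))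
    (hinv : Set.InvOn h rfun (Set.Ici (2 * m)) (Set.Ici 0)) :
    Filter.Tendsto (deriv h) Filter.atTop (nhds 1) ∧
      Filter.Tendsto (fun r => r * (1 - deriv h r)) Filter.atTop (nhds m) := by
  have hm2 : (0:ℝ) < 2 * m := by linarith
  set u : ℝ → ℝ := fun s => Real.sqrt (1 - 2 * m / s) with hudef
  -- basic facts about u on (2m, ∞)
  have hcpos : ∀ s, 2 * m < s → 0 < 1 - 2 * m / s := by
    intro s hs
    rw [sub_pos]
    exact (div_lt_one (hm2.trans hs)).2 hs
  have hupos : ∀ s, 2 * m < s → 0 < u s := fun s hs => Real.sqrt_pos.2 (hcpos s hs)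
  have hult : ∀ s, 2 * m < s → u s < 1 := by
    intro s hs
    have hs0 : 0 < s := hm2.trans hs
    have h1 : 1 - 2 * m / s < 1 := by
      have : 0 < 2 * m / s := div_pos hm2 hs0
      linarith
    have := Real.sqrt_lt_sqrt (hcpos s hs).le h1
    simpa [hudef] using this
  have hu2 : ∀ s, 2 * m < s → (u s) ^ 2 = 1 - 2 * m / s := fun s hs =>
    Real.sq_sqrt (hcpos s hs).le
  -- continuity of rfun on Ici (2m)
  have hcont : ContinuousOn rfun (Set.Ici (2 * m)) := by
    rw [hrfun]
    have hne : ∀ x ∈ Set.Ici (2 * m), x ≠ 0 := fun x hx => (lt_of_lt_of_le hm2 hx).ne'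
    have hcc : ContinuousOn (fun x : ℝ => 1 - 2 * m / x) (Set.Ici (2 * m)) :=
      continuousOn_const.sub (continuousOn_const.div continuousOn_id hne)
    have hcu : ContinuousOn (fun x : ℝ => Real.sqrt (1 - 2 * m / x)) (Set.Ici (2 * m)) :=
      hcc.sqrt
    have hule : ∀ x ∈ Set.Ici (2 * m), Real.sqrt (1 - 2 * m / x) < 1 := by
      intro x hx
      have hx0 : 0 < x := lt_of_lt_of_le hm2 hx
      have h0 : 0 ≤ 1 - 2 * m / x := by
        rw [sub_nonneg]; exact (div_le_one hx0).2 hx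
      have h1 : 1 - 2 * m / x < 1 := by
        have : 0 < 2 * m / x := div_pos hm2 hx0
        linarith
      have := Real.sqrt_lt_sqrt h0 h1
      simpa using this
    have hden : ∀ x ∈ Set.Ici (2 * m), (1 : ℝ) - Real.sqrt (1 - 2 * m / x) ≠ 0 := by
      intro x hx
      have := hule x hx
      intro hcontra; nlinarith
    have hdiv : ContinuousOn
        (fun x : ℝ => (1 + Real.sqrt (1 - 2 * m / x)) / (1 - Real.sqrt (1 - 2 * m / x)))
        (Set.Ici (2 * m)) :=
      (continuousOn_const.add hcu).div (continuousOn_const.sub hcu) hden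
    have hlog : ContinuousOn
        (fun x : ℝ => Real.log ((1 + Real.sqrt (1 - 2 * m / x)) / (1 - Real.sqrt (1 - 2 * m / x))))
        (Set.Ici (2 * m)) := by
      apply hdiv.log
      intro x hx
      have h1 : 0 ≤ Real.sqrt (1 - 2 * m / x) := Real.sqrt_nonneg _
      have h2 := hule x hx
      have : 0 < (1 + Real.sqrt (1 - 2 * m / x)) / (1 - Real.sqrt (1 - 2 * m / x)) :=
        div_pos (by linarith) (by linarith)
      exact this.ne'
    exact (continuousOn_id.mul hcu).add (continuousOn_const.mul hlog)
  -- derivatives of rfun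
  have hderiv : ∀ s, 2 * m < s → HasDerivAt rfun (1 / u s) s := by
    intro s hs
    rw [hrfun]
    exact sw_hasDerivAt m hm hs
  -- strict monotonicity of rfun
  have hmono : StrictMonoOn rfun (Set.Ici (2 * m)) := by
    apply strictMonoOn_of_deriv_pos (convex_Ici _) hcont
    intro x hx
    rw [interior_Ici] at hx
    rw [(hderiv x hx).deriv]
    exact div_pos one_pos (hupos x hx)
  have hr2m : rfun (2 * m) = 0 := by
    rw [hrfun]
    simp [div_self hm2.ne', Real.sqrt_zero]
  have hrfun_pos : ∀ s, 2 * m < s → 0 < rfun s := by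
    intro s hs
    have := hmono (Set.self_mem_Ici) (le_of_lt hs : (2*m) ≤ s) hs
    rwa [hr2m] at this
  -- monotonicity of h
  have hmonh : MonotoneOn h (Set.Ici 0) := by
    intro x hx y hy hxy
    by_contra hlt
    push_neg at hlt
    have := hmono (hmaps₂ hy) (hmaps₂ hx) hlt
    rw [hinv.2 hx, hinv.2 hy] at this
    linarith
  -- h r > 2m for r > 0
  have hgt : ∀ r, 0 < r → 2 * m < h r := by
    intro r hr
    rcases eq_or_lt_of_le (Set.mem_Ici.mp (hmaps₂ hr.le) : 2 * m ≤ h r) with he | hl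
    · exfalso
      have := hinv.2 hr.le
      rw [← he, hr2m] at this
      linarith
    · exact hl
  -- h tends to infinity
  have htop : Filter.Tendsto h Filter.atTop Filter.atTop := by
    rw [Filter.tendsto_atTop]
    intro M
    set M' := max M (2 * m + 1) with hM'
    have h1 : 2 * m ≤ M' := by
      have := le_max_right M (2 * m + 1); linarith
    filter_upwards [Filter.eventually_ge_atTop (max (rfun M') 0)] with r hr
    have hr0 : (0:ℝ) ≤ r := le_trans (le_max_right _ _) hr
    have hMr : rfun M' ≤ r := le_trans (le_max_left _ _) hr
    have hle : h (rfun M') ≤ h r := hmonh (hmaps₁ h1) hr0 hMr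
    rw [hinv.1 h1] at hle
    exact le_trans (le_max_left _ _) hle
  -- continuity of h at positive points
  have hcontAt : ∀ r, 0 < r → ContinuousAt h r := by
    intro r hr
    apply continuousAt_of_monotoneOn_of_image_mem_nhds hmonh (Ici_mem_nhds hr)
    apply Filter.mem_of_superset (Ioi_mem_nhds (hgt r hr))
    intro y hy
    exact ⟨rfun y, hmaps₁ (Set.mem_Ici.mpr (le_of_lt hy)), hinv.1 (Set.mem_Ici.mpr (le_of_lt hy))⟩
  -- derivative of h
  have hdh : ∀ r, 0 < r → HasDerivAt h (u (h r)) r := by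
    intro r hr
    have hs := hgt r hr
    have hne : (1 : ℝ) / u (h r) ≠ 0 := (div_pos one_pos (hupos _ hs)).ne'
    have hev : ∀ᶠ y in nhds r, rfun (h y) = y := by
      filter_upwards [Ioi_mem_nhds hr] with y hy using hinv.2 (Set.mem_Ici.mpr (le_of_lt hy))
    have := HasDerivAt.of_local_left_inverse (hcontAt r hr) (hderiv (h r) hs) hne hev
    rwa [one_div, inv_inv] at this
  have hda : ∀ᶠ r in Filter.atTop, deriv h r = u (h r) := by
    filter_upwards [Filter.eventually_gt_atTop 0] with r hr using (hdh r hr).deriv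
  -- limit of u at infinity
  have hu1 : Filter.Tendsto u Filter.atTop (nhds 1) := by
    have h0 : Filter.Tendsto (fun s : ℝ => 1 - 2 * m / s) Filter.atTop (nhds 1) := by
      have h2 := (tendsto_const_nhds (x := (2*m : ℝ)) (f := Filter.atTop)).div_atTop tendsto_id
      have := (tendsto_const_nhds (x := (1:ℝ)) (f := Filter.atTop)).sub h2
      simpa using this
    have := (Real.continuous_sqrt.continuousAt (x := (1:ℝ))).tendsto.comp h0
    simpa [hudef, Function.comp_def] using this
  -- first limit
  have part1 : Filter.Tendsto (deriv h) Filter.atTop (nhds 1) :=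
    (hu1.comp htop).congr' (hda.mono fun _ e => e.symm)
  refine ⟨part1, ?_⟩
  -- the auxiliary function G
  set G : ℝ → ℝ := fun s =>
    2 * m * u s / (1 + u s) +
      2 * m ^ 2 * (Real.log ((1 + u s) / (1 - u s)) / s) * (1 / (1 + u s)) with hGdef
  -- limit of 1 + u
  have h1u : Filter.Tendsto (fun s => 1 + u s) Filter.atTop (nhds 2) := by
    have := (tendsto_const_nhds (x := (1:ℝ)) (f := Filter.atTop)).add hu1
    norm_num at this
    exact this
  -- limit of log term over s
  have hLs : Filter.Tendsto (fun s => Real.log ((1 + u s) / (1 - u s)) / s)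
      Filter.atTop (nhds 0) := by
    have hkey : ∀ᶠ s in Filter.atTop, Real.log ((1 + u s) / (1 - u s)) / s =
        2 * Real.log (1 + u s) * s⁻¹ + Real.log s / s - Real.log (2 * m) * s⁻¹ := by
      filter_upwards [Filter.eventually_gt_atTop (2 * m),
        Filter.eventually_gt_atTop 0] with s hs hs0
      have hup := hupos s hs
      have hul := hult s hs
      have hsu : s * (u s) ^ 2 = s - 2 * m := by
        rw [hu2 s hs]; field_simp
      have hfrac : (1 + u s) / (1 - u s) = (1 + u s) ^ 2 * s / (2 * m) := by
        rw [div_eq_div_iff (by linarith) hm2.ne']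
        nlinarith [hsu]
      rw [hfrac, Real.log_div (by positivity) hm2.ne', Real.log_mul (by positivity) hs0.ne',
        Real.log_pow]
      push_cast
      ring
    have t2 : Filter.Tendsto (fun s : ℝ => s⁻¹) Filter.atTop (nhds 0) :=
      tendsto_inv_atTop_zero
    have t1 : Filter.Tendsto (fun s => 2 * Real.log (1 + u s)) Filter.atTop
        (nhds (2 * Real.log 2)) :=
      tendsto_const_nhds.mul
        ((Real.continuousAt_log (by norm_num)).tendsto.comp h1u)
    have t3 : Filter.Tendsto (fun s : ℝ => Real.log s / s) Filter.atTop (nhds 0) := by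
      have := Real.isLittleO_log_id_atTop.tendsto_div_nhds_zero
      simpa using this
    have t4 : Filter.Tendsto (fun s : ℝ => Real.log (2 * m) * s⁻¹) Filter.atTop (nhds 0) := by
      have := (tendsto_const_nhds (x := Real.log (2*m)) (f := Filter.atTop)).mul t2
      simpa using this
    have tall := ((t1.mul t2).add t3).sub t4
    norm_num at tall
    exact tall.congr' (hkey.mono fun _ e => e.symm)
  -- limit of G
  have hGtend : Filter.Tendsto G Filter.atTop (nhds m) := by
    have tA : Filter.Tendsto (fun s => 2 * m * u s / (1 + u s)) Filter.atTop
        (nhds (2 * m * 1 / 2)) :=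
      (tendsto_const_nhds.mul hu1).div h1u (by norm_num)
    have tB : Filter.Tendsto
        (fun s => 2 * m ^ 2 * (Real.log ((1 + u s) / (1 - u s)) / s) * (1 / (1 + u s)))
        Filter.atTop (nhds (2 * m ^ 2 * 0 * (1 / 2))) :=
      (tendsto_const_nhds.mul hLs).mul (tendsto_const_nhds.div h1u (by norm_num))
    have := tA.add tB
    have heq : 2 * m * 1 / 2 + 2 * m ^ 2 * 0 * (1 / 2) = m := by ring
    rw [heq] at this
    exact this
  -- identity r (1 - h'(r)) = G (h r) for r > 0
  have hEq : ∀ᶠ r in Filter.atTop, r * (1 - deriv h r) = G (h r) := by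
    filter_upwards [Filter.eventually_gt_atTop 0] with r hr
    rw [(hdh r hr).deriv]
    have hs : 2 * m < h r := hgt r hr
    have hrs : rfun (h r) = r := hinv.2 hr.le
    have hs0 : 0 < h r := hm2.trans hs
    have hsu : (h r) * (u (h r)) ^ 2 = h r - 2 * m := by
      rw [hu2 _ hs]; field_simp
    have halg := sw_alg m (h r) (u (h r))
      (Real.log ((1 + u (h r)) / (1 - u (h r)))) hs0 (hupos _ hs) (hult _ hs) hsu
    nth_rewrite 1 [← hrs]
    rw [hrfun]
    simp only [hGdef, hudef] at halg ⊢
    linarith [halg]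
  exact (hGtend.comp htop).congr' (hEq.mono fun _ e => e.symm)
end

section
/- Let m > 0, λ < 0, and let γ be a maximal solution of the Riccati equation γ'(r) + γ(r)² = −1/(4r²) − (m/r³)·(1 + m/(2r))^{-2} − λ·(1 + m/(2r))⁴ with γ(m/2) = 1/m. If ψ is a solution of the same equation with λ = 0 satisfying ψ(m/2) = 1/m and ψ is finite on [m/2, R), then γ(r) ≥ ψ(r) for all r ∈ [m/2, R); in particular γ has no singularity in [m/2, R). -/
/-- Comparison principle for radial Riccati solutions in the Schwarzschild manifold:
for `m > 0`, `λ < 0`, if `γ` solves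
`γ' + γ² = −1/(4r²) − (m/r³)(1 + m/(2r))⁻² − λ(1 + m/(2r))⁴` on `[m/2, b)` with
`γ(m/2) = 1/m`, and `ψ` solves the same equation with `λ = 0` on `[m/2, R)` with
`ψ(m/2) = 1/m`, then `γ ≥ ψ` on the common interval of definition; in particular `γ` does
not blow up to `−∞` before `ψ` does. -/
theorem riccati_radial_comparison (m : ℝ) (hm : 0 < m) (Λ : ℝ) (hΛ : Λ < 0)
    (b R : ℝ) (γ ψ : ℝ → ℝ)
    (hγ : ∀ r ∈ Set.Ico (m / 2) b,
      HasDerivAt γ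
        (-1 / (4 * r ^ 2) - (m / r ^ 3) * (1 + m / (2 * r))⁻¹ ^ 2
          - Λ * (1 + m / (2 * r)) ^ 4 - γ r ^ 2) r)
    (hγinit : γ (m / 2) = 1 / m)
    (hψ : ∀ r ∈ Set.Ico (m / 2) R,
      HasDerivAt ψ
        (-1 / (4 * r ^ 2) - (m / r ^ 3) * (1 + m / (2 * r))⁻¹ ^ 2 - ψ r ^ 2) r)
    (hψinit : ψ (m / 2) = 1 / m) :
    ∀ r ∈ Set.Ico (m / 2) (min b R), ψ r ≤ γ r := by
  intro r hr
  set a := m / 2 with ha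
  have ha0 : 0 < a := by positivity
  rcases eq_or_lt_of_le hr.1 with heq | hlt
  · rw [← heq, hγinit, hψinit]
  -- every point of [a, r] is in both Ico a b and Ico a R
  have hsub : ∀ x ∈ Set.Icc a r, x ∈ Set.Ico a b ∧ x ∈ Set.Ico a R := by
    intro x hx
    have hxb := lt_of_le_of_lt hx.2 hr.2
    exact ⟨⟨hx.1, lt_of_lt_of_le hxb (min_le_left _ _)⟩,
           ⟨hx.1, lt_of_lt_of_le hxb (min_le_right _ _)⟩⟩
  set f : ℝ → ℝ := fun t => γ t + ψ t with hf
  have hfcont : ContinuousOn f (Set.Icc a r) := fun x hx =>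
    (((hγ x (hsub x hx).1).continuousAt.add (hψ x (hsub x hx).2).continuousAt)).continuousWithinAt
  set φ : ℝ → ℝ := fun x => ∫ t in a..x, f t with hφ
  have har : a ≤ r := le_of_lt hlt
  have huIcc : Set.uIcc a r = Set.Icc a r := Set.uIcc_of_le har
  have hfint : MeasureTheory.IntegrableOn f (Set.uIcc a r) := by
    rw [huIcc]; exact hfcont.integrableOn_compact isCompact_Icc
  have hφcont : ContinuousOn φ (Set.Icc a r) := by
    have := intervalIntegral.continuousOn_primitive_interval (a := a) (b := r)
      (f := f) (μ := MeasureTheory.volume) hfint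
    rwa [huIcc] at this
  have hφderiv : ∀ x ∈ Set.Ioo a r, HasDerivAt φ (f x) x := by
    intro x hx
    have hxmem : x ∈ Set.Icc a r := Set.Ioo_subset_Icc_self hx
    have h1 : IntervalIntegrable f MeasureTheory.volume a x := by
      apply ContinuousOn.intervalIntegrable
      rw [Set.uIcc_of_le hx.1.le]
      exact hfcont.mono (Set.Icc_subset_Icc_right hx.2.le)
    have h2 : StronglyMeasurableAtFilter f (nhds x) := by
      have hopen : IsOpen (Set.Ioo a r) := isOpen_Ioo
      refine ContinuousOn.stronglyMeasurableAtFilter hopen ?_ x hx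
      exact hfcont.mono Set.Ioo_subset_Icc_self
    have h3 : ContinuousAt f x :=
      ((hγ x (hsub x hxmem).1).continuousAt.add (hψ x (hsub x hxmem).2).continuousAt)
    exact intervalIntegral.integral_hasDerivAt_right h1 h2 h3
  set v : ℝ → ℝ := fun x => (γ x - ψ x) * Real.exp (φ x) with hv
  have hvcont : ContinuousOn v (Set.Icc a r) := by
    apply ContinuousOn.mul
    · exact fun x hx => ((hγ x (hsub x hx).1).continuousAt.sub
        (hψ x (hsub x hx).2).continuousAt).continuousWithinAt
    · exact (Real.continuous_exp.comp_continuousOn hφcont)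
  have hvderiv : ∀ x ∈ Set.Ioo a r, HasDerivAt v
      ((-Λ * (1 + m / (2 * x)) ^ 4) * Real.exp (φ x)) x := by
    intro x hx
    have hxmem : x ∈ Set.Icc a r := Set.Ioo_subset_Icc_self hx
    have hd := ((hγ x (hsub x hxmem).1).sub (hψ x (hsub x hxmem).2)).fun_mul
      ((hφderiv x hx).exp)
    refine hd.congr_deriv ?_
    simp only [hf, Pi.sub_apply]
    ring
  have hvmono : StrictMonoOn v (Set.Icc a r) := by
    apply strictMonoOn_of_deriv_pos (convex_Icc a r) hvcont
    intro x hx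
    rw [interior_Icc] at hx
    rw [(hvderiv x hx).deriv]
    have hx0 : 0 < x := lt_trans ha0 hx.1
    have h1 : 0 < 1 + m / (2 * x) := by positivity
    have : 0 < -Λ := neg_pos.mpr hΛ
    positivity
  have hkey := hvmono (Set.left_mem_Icc.mpr har) (Set.right_mem_Icc.mpr har) hlt
  have hva : v a = 0 := by simp [hv, hγinit, hψinit]
  rw [hva] at hkey
  have hexp : 0 < Real.exp (φ r) := Real.exp_pos _
  simp only [hv] at hkey
  nlinarith [hkey, hexp]
end
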